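/- arXiv:1903.08599 — 7 statements merged into one kernel-verified Lean document; each statement's English description precedes it below -/
import Mathlib

section
/- Let X ∈ ℝ^{n×m}, D ∈ ℝ^{n×r}, F ∈ ℝ^{r×q}, E ∈ ℝ^{q×m}, let P ∈ S^n be positive definite, and let ε > 0. Suppose FᵀF ≤ 1 (the q×q identity minus FᵀF is positive semidefinite) and P − εDDᵀ is positive definite. Then (X + DFE)ᵀ P⁻¹ (X + DFE) ≤ ε⁻¹EᵀE + Xᵀ(P − εDDᵀ)⁻¹X, i.e., ε⁻¹EᵀE + Xᵀ(P − εDDᵀ)⁻¹X − (X + DFE)ᵀ P⁻¹ (X + DFE) is positive semidefinite. -/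
/-!
For `M` positive definite, `vᵀM⁻¹v = max_w (2 wᵀv - wᵀMw)`, the maximum being attained at
`w = M⁻¹v`. Evaluate this for `P` and `v = a + Db` at the maximiser `w = P⁻¹v`, and split
`P = Q + ε DDᵀ` with `Q = P - ε DDᵀ`: the result is the sum of the same expression for `Q`
(at `a` and `w`) and for `ε • 1` (at `b` and `Dᵀw`), each bounded by its maximum. Hence
`(a + Db)ᵀP⁻¹(a + Db) ≤ aᵀQ⁻¹a + ε⁻¹|b|²`; with `a = Xx`, `b = FEx` and `|FEx| ≤ |Ex|`
this is the quadratic form of the claimed inequality.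
-/

open Matrix

namespace Matrix

variable {n r : Type*} [Fintype n] [Fintype r] [DecidableEq n]

theorem dotProduct_transpose_mul_mul_mulVec {R m k : Type*} [CommSemiring R] [Fintype m]
    [Fintype k] (A : Matrix m k R) (B : Matrix m m R) (x : k → R) :
    x ⬝ᵥ ((Aᵀ * B * A) *ᵥ x) = (A *ᵥ x) ⬝ᵥ (B *ᵥ (A *ᵥ x)) := by
  rw [← mulVec_mulVec, ← mulVec_mulVec, dotProduct_mulVec, vecMul_transpose]

theorem two_mul_dotProduct_sub_eq_of_isUnit_det {R : Type*} [CommRing R] {M : Matrix n n R}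
    (hM : IsUnit M.det) (v : n → R) :
    2 * ((M⁻¹ *ᵥ v) ⬝ᵥ v) - (M⁻¹ *ᵥ v) ⬝ᵥ (M *ᵥ (M⁻¹ *ᵥ v)) = v ⬝ᵥ (M⁻¹ *ᵥ v) := by
  rw [mulVec_mulVec, mul_nonsing_inv M hM, one_mulVec, dotProduct_comm]
  ring

theorem PosDef.two_mul_dotProduct_sub_le {M : Matrix n n ℝ} (hM : M.PosDef) (v w : n → ℝ) :
    2 * (w ⬝ᵥ v) - w ⬝ᵥ (M *ᵥ w) ≤ v ⬝ᵥ (M⁻¹ *ᵥ v) := by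
  have hMT : Mᵀ = M := hM.isHermitian.eq
  have hinv : M * M⁻¹ = 1 := mul_nonsing_inv M ((isUnit_iff_isUnit_det M).mp hM.isUnit)
  have hsq := hM.posSemidef.dotProduct_mulVec_nonneg (M⁻¹ *ᵥ v - w)
  have hcross : (M⁻¹ *ᵥ v) ⬝ᵥ (M *ᵥ w) = w ⬝ᵥ v := by
    rw [dotProduct_mulVec, ← mulVec_transpose, hMT, mulVec_mulVec, hinv, one_mulVec,
      dotProduct_comm]
  simp only [star_trivial, mulVec_sub, dotProduct_sub, sub_dotProduct, mulVec_mulVec, hinv,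
    one_mulVec, hcross] at hsq
  rw [dotProduct_comm (M⁻¹ *ᵥ v) v] at hsq
  linarith

theorem dotProduct_inv_mulVec_add_mulVec_le [DecidableEq r] {P : Matrix n n ℝ}
    {D : Matrix n r ℝ} {ε : ℝ} (hε : 0 < ε) (hP : IsUnit P.det)
    (hQ : (P - ε • (D * Dᵀ)).PosDef) (a : n → ℝ) (b : r → ℝ) :
    (a + D *ᵥ b) ⬝ᵥ (P⁻¹ *ᵥ (a + D *ᵥ b))
      ≤ a ⬝ᵥ ((P - ε • (D * Dᵀ))⁻¹ *ᵥ a) + ε⁻¹ * (b ⬝ᵥ b) := by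
  set v := a + D *ᵥ b
  set w := P⁻¹ *ᵥ v
  set c := Dᵀ *ᵥ w
  have hεI : (ε • (1 : Matrix r r ℝ)).PosDef := PosDef.one.smul hε
  have hεI_inv : (ε • (1 : Matrix r r ℝ))⁻¹ = ε⁻¹ • 1 :=
    inv_eq_left_inv (by simp [smul_smul, hε.ne'])
  have hDb : w ⬝ᵥ (D *ᵥ b) = c ⬝ᵥ b := by rw [dotProduct_mulVec, ← mulVec_transpose]
  have hDD : w ⬝ᵥ ((D * Dᵀ) *ᵥ w) = c ⬝ᵥ c := by
    rw [← mulVec_mulVec, dotProduct_mulVec, ← mulVec_transpose]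
  have hsplit : 2 * (w ⬝ᵥ v) - w ⬝ᵥ (P *ᵥ w)
      = (2 * (w ⬝ᵥ a) - w ⬝ᵥ ((P - ε • (D * Dᵀ)) *ᵥ w))
        + (2 * (c ⬝ᵥ b) - c ⬝ᵥ ((ε • 1 : Matrix r r ℝ) *ᵥ c)) := by
    simp only [v, sub_mulVec, smul_mulVec, one_mulVec, dotProduct_add, dotProduct_sub,
      dotProduct_smul, hDb, hDD, smul_eq_mul]
    ring
  calc v ⬝ᵥ (P⁻¹ *ᵥ v) = 2 * (w ⬝ᵥ v) - w ⬝ᵥ (P *ᵥ w) :=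
        (two_mul_dotProduct_sub_eq_of_isUnit_det hP v).symm
    _ ≤ a ⬝ᵥ ((P - ε • (D * Dᵀ))⁻¹ *ᵥ a) + b ⬝ᵥ ((ε • (1 : Matrix r r ℝ))⁻¹ *ᵥ b) := by
        rw [hsplit]
        exact add_le_add (hQ.two_mul_dotProduct_sub_le a w) (hεI.two_mul_dotProduct_sub_le b c)
    _ = a ⬝ᵥ ((P - ε • (D * Dᵀ))⁻¹ *ᵥ a) + ε⁻¹ * (b ⬝ᵥ b) := by
        rw [hεI_inv, smul_mulVec, one_mulVec, dotProduct_smul, smul_eq_mul]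

theorem dotProduct_mulVec_self_le_of_posSemidef_one_sub {m k : Type*} [Fintype m] [Fintype k]
    [DecidableEq k] {F : Matrix m k ℝ} (hF : (1 - Fᵀ * F).PosSemidef) (e : k → ℝ) :
    (F *ᵥ e) ⬝ᵥ (F *ᵥ e) ≤ e ⬝ᵥ e := by
  have := hF.dotProduct_mulVec_nonneg e
  rw [star_trivial, sub_mulVec, one_mulVec, dotProduct_sub, ← mulVec_mulVec, dotProduct_mulVec,
    vecMul_transpose] at this
  linarith

end Matrix

/-- For `X ∈ ℝ^{n×m}`, `D ∈ ℝ^{n×r}`, `F ∈ ℝ^{r×q}` with `FᵀF ≤ 1`, `E ∈ ℝ^{q×m}`,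
symmetric positive definite `P ∈ ℝ^{n×n}` and `ε > 0` with `P − εDDᵀ > 0`:
`(X + DFE)ᵀ P⁻¹ (X + DFE) ≤ ε⁻¹EᵀE + Xᵀ(P − εDDᵀ)⁻¹X`. -/
theorem uncertain_quadratic_bound_inv (n m r q : ℕ)
    (X : Matrix (Fin n) (Fin m) ℝ) (D : Matrix (Fin n) (Fin r) ℝ)
    (F : Matrix (Fin r) (Fin q) ℝ) (E : Matrix (Fin q) (Fin m) ℝ)
    (P : Matrix (Fin n) (Fin n) ℝ) (ε : ℝ) (hε : 0 < ε)
    (hP : P.PosDef)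
    (hF : ((1 : Matrix (Fin q) (Fin q) ℝ) - Fᵀ * F).PosSemidef)
    (hPD : (P - ε • (D * Dᵀ)).PosDef) :
    (ε⁻¹ • (Eᵀ * E) + Xᵀ * (P - ε • (D * Dᵀ))⁻¹ * X
      - (X + D * F * E)ᵀ * P⁻¹ * (X + D * F * E)).PosSemidef := by
  set Q := P - ε • (D * Dᵀ)
  set Y := X + D * F * E
  have hHerm : (ε⁻¹ • (Eᵀ * E) + Xᵀ * Q⁻¹ * X - Yᵀ * P⁻¹ * Y).IsHermitian :=
    (((isHermitian_conjTranspose_mul_self E).smul (.all _)).add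
      (isHermitian_conjTranspose_mul_mul X hPD.isHermitian.inv)).sub
      (isHermitian_conjTranspose_mul_mul Y hP.isHermitian.inv)
  refine .of_dotProduct_mulVec_nonneg hHerm fun x => ?_
  have hYx : Y *ᵥ x = X *ᵥ x + D *ᵥ (F *ᵥ (E *ᵥ x)) := by
    simp only [Y, add_mulVec, ← mulVec_mulVec]
  have hPx := dotProduct_inv_mulVec_add_mulVec_le hε
    ((isUnit_iff_isUnit_det P).mp hP.isUnit) hPD (X *ᵥ x) (F *ᵥ (E *ᵥ x))
  have hFx := mul_le_mul_of_nonneg_left (dotProduct_mulVec_self_le_of_posSemidef_one_sub hF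
    (E *ᵥ x)) (inv_pos.mpr hε).le
  rw [star_trivial, sub_mulVec, add_mulVec, smul_mulVec, dotProduct_sub, dotProduct_add,
    dotProduct_smul, dotProduct_transpose_mul_mul_mulVec, dotProduct_transpose_mul_mul_mulVec,
    ← mulVec_mulVec, dotProduct_mulVec, vecMul_transpose, hYx, smul_eq_mul]
  linarith
end

section
/- Let X ∈ ℝ^{n×m}, D ∈ ℝ^{n×r}, F ∈ ℝ^{r×q}, E ∈ ℝ^{q×m}, let P ∈ S^n be positive definite, and let ε > 0. Suppose FᵀF ≤ 1 (the q×q identity minus FᵀF is positive semidefinite) and ε·1 − DᵀPD is positive definite (1 the r×r identity). Then (X + DFE)ᵀ P (X + DFE) ≤ εEᵀE + XᵀPD(ε·1 − DᵀPD)⁻¹DᵀPX + XᵀPX, i.e., εEᵀE + XᵀPD(ε·1 − DᵀPD)⁻¹DᵀPX + XᵀPX − (X + DFE)ᵀ P (X + DFE) is positive semidefinite. -/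
/-!
Completing the square. With `S = ε·1 − DᵀPD` the gap between the two sides equals
`(S⁻¹DᵀPX − FE)ᵀ S (S⁻¹DᵀPX − FE) + ε Eᵀ(1 − FᵀF)E`,
a sum of two congruence transforms of the positive semidefinite matrices `S` and `ε(1 − FᵀF)`.
-/

open Matrix

namespace Matrix

variable {k l R : Type*} [Fintype k]

theorem PosSemidef.transpose_mul_mul_same [Finite l] {A : Matrix k k ℝ} (hA : A.PosSemidef)
    (B : Matrix k l ℝ) : (Bᵀ * A * B).PosSemidef := by
  simpa only [conjTranspose_eq_transpose_of_trivial] using hA.conjTranspose_mul_mul_same B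

theorem transpose_mul_mul_self_inv_mul_sub [CommRing R] [DecidableEq k] {S : Matrix k k R}
    (hS : Sᵀ = S) (hdet : IsUnit S.det) (B C : Matrix k l R) :
    (S⁻¹ * B - C)ᵀ * S * (S⁻¹ * B - C) = Bᵀ * S⁻¹ * B - Bᵀ * C - Cᵀ * B + Cᵀ * S * C := by
  have hSinv : (S⁻¹)ᵀ = S⁻¹ := by rw [transpose_nonsing_inv, hS]
  simp only [transpose_sub, transpose_mul, hSinv, Matrix.sub_mul, Matrix.mul_sub, Matrix.mul_assoc,
    mul_nonsing_inv_cancel_left _ _ hdet, nonsing_inv_mul_cancel_left _ _ hdet]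
  abel

end Matrix

theorem uncertain_quadratic_gap_eq {R n m r q : Type*} [CommRing R] [Fintype n] [Fintype r]
    [Fintype q] [DecidableEq r] [DecidableEq q]
    (X : Matrix n m R) (D : Matrix n r R) (F : Matrix r q R) (E : Matrix q m R)
    {P : Matrix n n R} (hP : Pᵀ = P) (ε : R)
    (hdet : IsUnit (ε • (1 : Matrix r r R) - Dᵀ * P * D).det) :
    let S := ε • (1 : Matrix r r R) - Dᵀ * P * D
    ε • (Eᵀ * E) + Xᵀ * P * D * S⁻¹ * Dᵀ * P * X + Xᵀ * P * X
        - (X + D * F * E)ᵀ * P * (X + D * F * E)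
      = (S⁻¹ * (Dᵀ * P * X) - F * E)ᵀ * S * (S⁻¹ * (Dᵀ * P * X) - F * E)
        + Eᵀ * (ε • (1 - Fᵀ * F)) * E := by
  intro S
  have hS : Sᵀ = S := by simp [S, transpose_sub, hP, Matrix.mul_assoc]
  rw [transpose_mul_mul_self_inv_mul_sub hS hdet]
  simp only [S, transpose_add, transpose_mul, transpose_transpose, hP, Matrix.add_mul,
    Matrix.mul_add, Matrix.sub_mul, Matrix.mul_sub, Matrix.smul_mul, Matrix.mul_smul,
    Matrix.mul_one, Matrix.mul_assoc, smul_sub]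
  abel

/-- For `X ∈ ℝ^{n×m}`, `D ∈ ℝ^{n×r}`, `F ∈ ℝ^{r×q}` with `FᵀF ≤ 1`, `E ∈ ℝ^{q×m}`,
symmetric positive definite `P ∈ ℝ^{n×n}` and `ε > 0` with `ε·1 − DᵀPD > 0`:
`(X + DFE)ᵀ P (X + DFE) ≤ εEᵀE + XᵀPD(ε·1 − DᵀPD)⁻¹DᵀPX + XᵀPX`. -/
theorem uncertain_quadratic_bound (n m r q : ℕ)
    (X : Matrix (Fin n) (Fin m) ℝ) (D : Matrix (Fin n) (Fin r) ℝ)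
    (F : Matrix (Fin r) (Fin q) ℝ) (E : Matrix (Fin q) (Fin m) ℝ)
    (P : Matrix (Fin n) (Fin n) ℝ) (ε : ℝ) (hε : 0 < ε)
    (hP : P.PosDef)
    (hF : ((1 : Matrix (Fin q) (Fin q) ℝ) - Fᵀ * F).PosSemidef)
    (hPD : (ε • (1 : Matrix (Fin r) (Fin r) ℝ) - Dᵀ * P * D).PosDef) :
    (ε • (Eᵀ * E)
      + Xᵀ * P * D * (ε • (1 : Matrix (Fin r) (Fin r) ℝ) - Dᵀ * P * D)⁻¹ * Dᵀ * P * X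
      + Xᵀ * P * X
      - (X + D * F * E)ᵀ * P * (X + D * F * E)).PosSemidef := by
  have hPsymm : Pᵀ = P := (conjTranspose_eq_transpose_of_trivial P).symm.trans hP.isHermitian
  rw [uncertain_quadratic_gap_eq X D F E hPsymm ε hPD.det_pos.ne'.isUnit]
  exact (hPD.posSemidef.transpose_mul_mul_same _).add ((hF.smul hε.le).transpose_mul_mul_same E)
end

section
/- Let P₁₁ ∈ S^n, P₁₂ ∈ ℝ^{n×m}, P₂₂ ∈ S^m, P₁₃ ∈ ℝ^{n×p}, P₂₃ ∈ ℝ^{m×p}, and P₃₃ ∈ S^p. There exists X ∈ ℝ^{m×n} such that the 3×3 symmetric block matrix [[P₁₁, P₁₂ + Xᵀ, P₁₃], [P₁₂ᵀ + X, P₂₂, P₂₃], [P₁₃ᵀ, P₂₃ᵀ, P₃₃]] is negative definite if and only if both 2×2 symmetric block matrices [[P₁₁, P₁₃], [P₁₃ᵀ, P₃₃]] and [[P₂₂, P₂₃], [P₂₃ᵀ, P₃₃]] are negative definite. Moreover, when the latter two conditions hold, X = P₂₃P₃₃⁻¹P₁₃ᵀ − P₁₂ᵀ is such a solution. -/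
/-!
Regroup the indices as `((1, 2), 3)`. Since `P₃₃ < 0`, negative definiteness of the 3×3 matrix is
equivalent to that of the Schur complement of `P₃₃`, which is the 2×2 block matrix with diagonal
blocks `Sᵢ = Pᵢᵢ - Pᵢ₃ P₃₃⁻¹ Pᵢ₃ᵀ` and off-diagonal block `P₁₂ + Xᵀ - P₁₃ P₃₃⁻¹ P₂₃ᵀ`. The given `X`
makes the off-diagonal block vanish, and `S₁, S₂ < 0` are exactly the Schur-complement forms of the
two 2×2 conditions. Conversely, those 2×2 matrices are principal submatrices of the 3×3 one.
-/

open Matrix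
open scoped ComplexOrder

/-- A 3×3 symmetric-pattern block matrix assembled from the indicated blocks. -/
def Matrix.block3 {n m p : Type*} (A : Matrix n n ℝ) (B : Matrix n m ℝ) (C : Matrix n p ℝ)
    (D : Matrix m n ℝ) (E : Matrix m m ℝ) (F : Matrix m p ℝ)
    (G : Matrix p n ℝ) (H : Matrix p m ℝ) (I : Matrix p p ℝ) :
    Matrix (n ⊕ (m ⊕ p)) (n ⊕ (m ⊕ p)) ℝ :=
  Matrix.fromBlocks A (Matrix.fromCols B C) (Matrix.fromRows D G)
    (Matrix.fromBlocks E F H I)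

namespace Matrix

section SchurComplement

variable {𝕜 m n : Type*} [RCLike 𝕜] [Fintype m] [Fintype n] [DecidableEq m] [DecidableEq n]

/-- Upgrades the semidefinite `PosDef.fromBlocks₂₂` through
`det (fromBlocks A B Bᴴ D) = det D * det (A - B D⁻¹ Bᴴ)`. -/
theorem posDef_fromBlocks₂₂_iff (A : Matrix m m 𝕜) (B : Matrix m n 𝕜) {D : Matrix n n 𝕜}
    (hD : D.PosDef) : (fromBlocks A B Bᴴ D).PosDef ↔ (A - B * D⁻¹ * Bᴴ).PosDef := by
  let _ := hD.isUnit.invertible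
  by_cases hS : (A - B * D⁻¹ * Bᴴ).PosSemidef
  · rw [((PosDef.fromBlocks₂₂ A B hD).2 hS).posDef_iff_det_ne_zero, hS.posDef_iff_det_ne_zero,
      det_fromBlocks₂₂, invOf_eq_nonsing_inv, mul_ne_zero_iff,
      and_iff_right (isUnit_iff_isUnit_det D |>.1 hD.isUnit).ne_zero]
  · exact iff_of_false (fun h => hS ((PosDef.fromBlocks₂₂ A B hD).1 h.posSemidef))
      (fun h => hS h.posSemidef)

theorem PosDef.fromBlocks_zero_zero {A : Matrix m m 𝕜} {D : Matrix n n 𝕜} (hA : A.PosDef)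
    (hD : D.PosDef) : (fromBlocks A 0 0 D).PosDef := by
  simpa using (posDef_fromBlocks₂₂_iff A 0 hD).2 (by simpa using hA)

end SchurComplement

section Block3

variable {n m p : Type*} (A : Matrix n n ℝ) (B : Matrix n m ℝ) (C : Matrix n p ℝ)
    (D : Matrix m n ℝ) (E : Matrix m m ℝ) (F : Matrix m p ℝ)
    (G : Matrix p n ℝ) (H : Matrix p m ℝ) (I : Matrix p p ℝ)

theorem neg_block3 :
    -block3 A B C D E F G H I = block3 (-A) (-B) (-C) (-D) (-E) (-F) (-G) (-H) (-I) := by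
  ext (i | i | i) (j | j | j) <;> simp [block3]

theorem block3_eq_submatrix_fromBlocks :
    block3 A B C D E F G H I =
      (fromBlocks (fromBlocks A B D E) (fromRows C F) (fromCols G H) I).submatrix
        (Equiv.sumAssoc n m p).symm (Equiv.sumAssoc n m p).symm := by
  ext (i | i | i) (j | j | j) <;> simp [block3]

theorem block3_submatrix_inr :
    (block3 A B C D E F G H I).submatrix Sum.inr Sum.inr = fromBlocks E F H I := by
  ext (i | i) (j | j) <;> simp [block3]

theorem block3_submatrix_map_id_inr :
    (block3 A B C D E F G H I).submatrix (Sum.map id Sum.inr) (Sum.map id Sum.inr) =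
      fromBlocks A C G I := by
  ext (i | i) (j | j) <;> simp [block3]

variable {A B C D E F G H I}

theorem PosDef.fromBlocks_of_block3 (h : (block3 A B C D E F G H I).PosDef) :
    (fromBlocks A C G I).PosDef ∧ (fromBlocks E F H I).PosDef :=
  ⟨block3_submatrix_map_id_inr A B C D E F G H I ▸
      h.submatrix (Sum.map_injective.2 ⟨Function.injective_id, Sum.inr_injective⟩),
    block3_submatrix_inr A B C D E F G H I ▸ h.submatrix Sum.inr_injective⟩

end Block3

theorem posDef_block3_of_posDef_fromBlocks {n m p : Type*} [Fintype n] [Fintype m] [Fintype p]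
    [DecidableEq n] [DecidableEq m] [DecidableEq p] {A₁ : Matrix n n ℝ} {A₂ : Matrix m m ℝ}
    {B₁ : Matrix n p ℝ} {B₂ : Matrix m p ℝ} {D : Matrix p p ℝ}
    (h₁ : (fromBlocks A₁ B₁ B₁ᵀ D).PosDef) (h₂ : (fromBlocks A₂ B₂ B₂ᵀ D).PosDef) :
    (block3 A₁ (B₁ * D⁻¹ * B₂ᵀ) B₁ (B₂ * D⁻¹ * B₁ᵀ) A₂ B₂ B₁ᵀ B₂ᵀ D).PosDef := by
  have hD : D.PosDef := h₁.submatrix Sum.inr_injective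
  simp only [← conjTranspose_eq_transpose_of_trivial] at h₁ h₂ ⊢
  have hS₁ := (posDef_fromBlocks₂₂_iff A₁ B₁ hD).1 h₁
  have hS₂ := (posDef_fromBlocks₂₂_iff A₂ B₂ hD).1 h₂
  have hSchur : fromBlocks A₁ (B₁ * D⁻¹ * B₂ᴴ) (B₂ * D⁻¹ * B₁ᴴ) A₂ -
        fromRows B₁ B₂ * D⁻¹ * (fromRows B₁ B₂)ᴴ =
      fromBlocks (A₁ - B₁ * D⁻¹ * B₁ᴴ) 0 0 (A₂ - B₂ * D⁻¹ * B₂ᴴ) := by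
    rw [conjTranspose_fromRows_eq_fromCols_conjTranspose, fromRows_mul, fromRows_mul_fromCols,
      sub_eq_add_neg, fromBlocks_neg, fromBlocks_add]
    simp [sub_eq_add_neg]
  rw [block3_eq_submatrix_fromBlocks, ← conjTranspose_fromRows_eq_fromCols_conjTranspose]
  refine PosDef.submatrix ?_ (Equiv.injective _)
  rw [posDef_fromBlocks₂₂_iff _ _ hD, hSchur]
  exact hS₁.fromBlocks_zero_zero hS₂

end Matrix

theorem offdiag_completion_negdef_general (n m p : ℕ)
    (P11 : Matrix (Fin n) (Fin n) ℝ) (P12 : Matrix (Fin n) (Fin m) ℝ)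
    (P22 : Matrix (Fin m) (Fin m) ℝ) (P13 : Matrix (Fin n) (Fin p) ℝ)
    (P23 : Matrix (Fin m) (Fin p) ℝ) (P33 : Matrix (Fin p) (Fin p) ℝ) :
    ((∃ X : Matrix (Fin m) (Fin n) ℝ,
        (-(Matrix.block3 P11 (P12 + Xᵀ) P13 (P12ᵀ + X) P22 P23 P13ᵀ P23ᵀ P33)).PosDef) ↔
      ((-(Matrix.fromBlocks P11 P13 P13ᵀ P33)).PosDef ∧
        (-(Matrix.fromBlocks P22 P23 P23ᵀ P33)).PosDef))
    ∧ (((-(Matrix.fromBlocks P11 P13 P13ᵀ P33)).PosDef ∧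
          (-(Matrix.fromBlocks P22 P23 P23ᵀ P33)).PosDef) →
        (-(Matrix.block3 P11 (P12 + (P23 * P33⁻¹ * P13ᵀ - P12ᵀ)ᵀ) P13
            (P12ᵀ + (P23 * P33⁻¹ * P13ᵀ - P12ᵀ)) P22 P23 P13ᵀ P23ᵀ P33)).PosDef) := by
  have completion : (-(fromBlocks P11 P13 P13ᵀ P33)).PosDef ∧
      (-(fromBlocks P22 P23 P23ᵀ P33)).PosDef →
      (-(block3 P11 (P12 + (P23 * P33⁻¹ * P13ᵀ - P12ᵀ)ᵀ) P13
        (P12ᵀ + (P23 * P33⁻¹ * P13ᵀ - P12ᵀ)) P22 P23 P13ᵀ P23ᵀ P33)).PosDef := by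
    rintro ⟨h₁, h₂⟩
    rw [fromBlocks_neg, ← transpose_neg] at h₁ h₂
    have hD : (-P33).PosDef := h₁.submatrix Sum.inr_injective
    have hunit : IsUnit P33 := neg_neg P33 ▸ hD.isUnit.neg
    have hinv : (-P33)⁻¹ = -P33⁻¹ := inv_eq_left_inv <| by
      rw [neg_mul_neg, nonsing_inv_mul _ ((isUnit_iff_isUnit_det _).1 hunit)]
    have hsymm : P33ᵀ = P33 := by simpa using hD.isHermitian.eq
    convert posDef_block3_of_posDef_fromBlocks h₁ h₂ using 1
    rw [neg_block3]
    congr 1 <;> simp [hinv, transpose_nonsing_inv, hsymm, Matrix.mul_assoc]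
  refine ⟨⟨fun ⟨X, hX⟩ => ?_, fun h => ⟨_, completion h⟩⟩, completion⟩
  rw [neg_block3] at hX
  simpa [fromBlocks_neg] using hX.fromBlocks_of_block3

/-- There exists `X` making the 3×3 block matrix
`[[P₁₁, P₁₂ + Xᵀ, P₁₃], [P₁₂ᵀ + X, P₂₂, P₂₃], [P₁₃ᵀ, P₂₃ᵀ, P₃₃]]` negative definite
iff `[[P₁₁, P₁₃], [P₁₃ᵀ, P₃₃]] < 0` and `[[P₂₂, P₂₃], [P₂₃ᵀ, P₃₃]] < 0`; moreover, in that case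
`X = P₂₃P₃₃⁻¹P₁₃ᵀ − P₁₂ᵀ` is such a solution. -/
theorem offdiag_completion_negdef (n m p : ℕ)
    (P11 : Matrix (Fin n) (Fin n) ℝ) (P12 : Matrix (Fin n) (Fin m) ℝ)
    (P22 : Matrix (Fin m) (Fin m) ℝ) (P13 : Matrix (Fin n) (Fin p) ℝ)
    (P23 : Matrix (Fin m) (Fin p) ℝ) (P33 : Matrix (Fin p) (Fin p) ℝ)
    (hP11 : P11.IsSymm) (hP22 : P22.IsSymm) (hP33 : P33.IsSymm) :
    ((∃ X : Matrix (Fin m) (Fin n) ℝ,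
        (-(Matrix.block3 P11 (P12 + Xᵀ) P13 (P12ᵀ + X) P22 P23 P13ᵀ P23ᵀ P33)).PosDef) ↔
      ((-(Matrix.fromBlocks P11 P13 P13ᵀ P33)).PosDef ∧
        (-(Matrix.fromBlocks P22 P23 P23ᵀ P33)).PosDef))
    ∧ (((-(Matrix.fromBlocks P11 P13 P13ᵀ P33)).PosDef ∧
          (-(Matrix.fromBlocks P22 P23 P23ᵀ P33)).PosDef) →
        (-(Matrix.block3 P11 (P12 + (P23 * P33⁻¹ * P13ᵀ - P12ᵀ)ᵀ) P13
            (P12ᵀ + (P23 * P33⁻¹ * P13ᵀ - P12ᵀ)) P22 P23 P13ᵀ P23ᵀ P33)).PosDef) :=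
  offdiag_completion_negdef_general n m p P11 P12 P22 P13 P23 P33
end

section
/- Let X ∈ S^n, H ∈ ℝ^{m×n}, G ∈ ℝ^{m×m}, and let P ∈ S^m be positive definite. If the symmetric block matrix [[X, Hᵀ], [H, G + Gᵀ − P]] is positive definite, then G is invertible and X − HᵀG⁻¹PG⁻ᵀH is positive definite (where G⁻ᵀ = (G⁻¹)ᵀ). -/
/-!
The lower-right block `G + Gᵀ - P` of the positive definite block matrix is positive definite.
If `G v = 0`, its quadratic form at `v` equals `-vᵀ P v ≤ 0`, so `v = 0` and `G` is invertible.
Congruence of the block matrix by the injective `[I; -G⁻ᵀ H]` then gives exactly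
`X - Hᵀ G⁻¹ P G⁻ᵀ H`: the cross terms `-Hᵀ G⁻ᵀ H - Hᵀ G⁻¹ H` cancel against
`Hᵀ G⁻¹ (G + Gᵀ) G⁻ᵀ H`.
-/

open Matrix

namespace Matrix

variable {m n R : Type*}

theorem PosDef.toBlocks₂₂ [CommRing R] [PartialOrder R] [StarRing R]
    {M : Matrix (m ⊕ n) (m ⊕ n) R} (hM : M.PosDef) : M.toBlocks₂₂.PosDef :=
  hM.submatrix Sum.inr_injective

theorem fromRows_one_mulVec_injective [Fintype n] [DecidableEq n] [CommRing R]
    (K : Matrix m n R) :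
    Function.Injective (fromRows (1 : Matrix n n R) K).mulVec := fun v w hvw => by
  funext i
  simpa [fromRows_mulVec] using congrFun hvw (Sum.inl i)

theorem transpose_fromRows_mul_fromBlocks_mul_fromRows [Fintype m] [Fintype n] [CommRing R]
    {k : Type*} (A : Matrix m m R) (B : Matrix m n R) (C : Matrix n m R) (D : Matrix n n R)
    (E₁ : Matrix m k R) (E₂ : Matrix n k R) :
    (fromRows E₁ E₂)ᵀ * fromBlocks A B C D * fromRows E₁ E₂ =
      E₁ᵀ * A * E₁ + E₁ᵀ * B * E₂ + E₂ᵀ * C * E₁ + E₂ᵀ * D * E₂ := by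
  rw [transpose_fromRows, Matrix.mul_assoc, fromBlocks_mul_fromRows, fromCols_mul_fromRows]
  simp only [Matrix.mul_add, Matrix.mul_assoc]
  abel

theorem isUnit_of_posDef_add_transpose_sub [Fintype n] [DecidableEq n] {G P : Matrix n n ℝ}
    (hP : P.PosSemidef) (h : (G + Gᵀ - P).PosDef) : IsUnit G := by
  by_contra hG
  rw [isUnit_iff_isUnit_det, isUnit_iff_ne_zero, not_not] at hG
  obtain ⟨v, hv, hGv⟩ := exists_mulVec_eq_zero_iff.mpr hG
  have hpos := h.dotProduct_mulVec_pos hv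
  have hnonneg := hP.dotProduct_mulVec_nonneg v
  have hGtv : v ⬝ᵥ (Gᵀ *ᵥ v) = 0 := by
    rw [dotProduct_mulVec, vecMul_transpose, hGv, zero_dotProduct]
  simp only [star_trivial, sub_mulVec, add_mulVec, dotProduct_sub, hGv, hGtv, zero_add]
    at hpos hnonneg
  linarith

theorem transpose_fromRows_mul_fromBlocks_add_transpose_sub_mul_fromRows [Fintype m] [Fintype n]
    [DecidableEq m] [DecidableEq n] [CommRing R] {G : Matrix n n R} (hG : IsUnit G)
    (X : Matrix m m R) (H : Matrix n m R) (P : Matrix n n R) :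
    (fromRows (1 : Matrix m m R) (-(G⁻¹ᵀ * H)))ᵀ * fromBlocks X Hᵀ H (G + Gᵀ - P) *
        fromRows (1 : Matrix m m R) (-(G⁻¹ᵀ * H)) =
      X - Hᵀ * G⁻¹ * P * G⁻¹ᵀ * H := by
  have hdet := (isUnit_iff_isUnit_det G).mp hG
  rw [transpose_fromRows_mul_fromBlocks_mul_fromRows]
  simp only [transpose_one, Matrix.one_mul, Matrix.mul_one, transpose_neg, transpose_mul,
    transpose_transpose, Matrix.mul_neg, Matrix.neg_mul, Matrix.mul_sub, Matrix.mul_add,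
    Matrix.sub_mul, Matrix.add_mul, Matrix.mul_assoc, nonsing_inv_mul_cancel_left _ _ hdet,
    transpose_nonsing_inv, mul_nonsing_inv_cancel_left _ _ (isUnit_det_transpose _ hdet)]
  abel

end Matrix

theorem posdef_block_implies_quadratic_bound_general (n m : ℕ)
    (X : Matrix (Fin n) (Fin n) ℝ) (H : Matrix (Fin m) (Fin n) ℝ)
    (G : Matrix (Fin m) (Fin m) ℝ) (P : Matrix (Fin m) (Fin m) ℝ)
    (hP : P.PosDef)
    (h : (Matrix.fromBlocks X Hᵀ H (G + Gᵀ - P)).PosDef) :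
    IsUnit G ∧ (X - Hᵀ * G⁻¹ * P * (G⁻¹)ᵀ * H).PosDef := by
  have hD : (G + Gᵀ - P).PosDef := by simpa using h.toBlocks₂₂
  have hG : IsUnit G := isUnit_of_posDef_add_transpose_sub hP.posSemidef hD
  refine ⟨hG, ?_⟩
  rw [← transpose_fromRows_mul_fromBlocks_add_transpose_sub_mul_fromRows hG,
    ← conjTranspose_eq_transpose_of_trivial]
  exact h.conjTranspose_mul_mul_same (fromRows_one_mulVec_injective _)

/-- If `[[X, Hᵀ], [H, G + Gᵀ − P]]` is positive definite (with `X` symmetric and `P`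
positive definite), then `G` is invertible and `X − HᵀG⁻¹PG⁻ᵀH` is positive definite. -/
theorem posdef_block_implies_quadratic_bound (n m : ℕ)
    (X : Matrix (Fin n) (Fin n) ℝ) (H : Matrix (Fin m) (Fin n) ℝ)
    (G : Matrix (Fin m) (Fin m) ℝ) (P : Matrix (Fin m) (Fin m) ℝ)
    (hX : X.IsSymm) (hP : P.PosDef)
    (h : (Matrix.fromBlocks X Hᵀ H (G + Gᵀ - P)).PosDef) :
    IsUnit G ∧ (X - Hᵀ * G⁻¹ * P * (G⁻¹)ᵀ * H).PosDef :=
  posdef_block_implies_quadratic_bound_general n m X H G P hP h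
end

section
/- (Iterative convex overbounding, bilinear case) Let Q ∈ S^n, R, R₀ ∈ ℝ^{n×m}, S, S₀ ∈ ℝ^{m×n}, and let W ∈ S^m be positive definite. If the 3×3 symmetric block matrix [[Q + RS₀ + S₀ᵀRᵀ + R₀S + SᵀR₀ᵀ − R₀S₀ − S₀ᵀR₀ᵀ, R − R₀, Sᵀ − S₀ᵀ], [(R − R₀)ᵀ, −W⁻¹, 0], [S − S₀, 0, −W]] is negative definite, then Q + RS + SᵀRᵀ is negative definite. -/
open Matrix

/-!
Write `B = R - R₀`, `C = S - S₀` and let `A` be the top-left block, so that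
`Q + RS + SᵀRᵀ = A + BC + CᵀBᵀ`. Congruence of the block matrix `M` with
`T = [1; WBᵀ; W⁻¹C]` eliminates the two lower block rows: `TᵀMT = A + BWBᵀ + CᵀW⁻¹C`, which is
therefore negative definite. The matrix Young inequality `BC + CᵀBᵀ ≤ BWBᵀ + CᵀW⁻¹C`, i.e.
`(WBᵀ - C)ᵀW⁻¹(WBᵀ - C) ≥ 0`, then overbounds the bilinear term.
-/

open scoped MatrixOrder ComplexOrder

namespace Matrix

variable {n m : Type*} [Fintype n] [Fintype m] [DecidableEq m]

theorem PosDef.mul_add_conjTranspose_mul_le {𝕜 : Type*} [RCLike 𝕜] {W : Matrix m m 𝕜}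
    (hW : W.PosDef) (B : Matrix n m 𝕜) (C : Matrix m n 𝕜) :
    B * C + Cᴴ * Bᴴ ≤ B * W * Bᴴ + Cᴴ * W⁻¹ * C := by
  have hW' : IsUnit W.det := (isUnit_iff_isUnit_det W).mp hW.isUnit
  rw [le_iff]
  convert hW.inv.posSemidef.conjTranspose_mul_mul_same (W * Bᴴ - C) using 1
  simp only [conjTranspose_sub, conjTranspose_mul, conjTranspose_conjTranspose,
    hW.isHermitian.eq, Matrix.sub_mul, Matrix.mul_sub, Matrix.mul_assoc,
    nonsing_inv_mul_cancel_left (h := hW'), mul_nonsing_inv_cancel_left (h := hW')]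
  abel

variable [DecidableEq n]

theorem block3_mul_fromRows (A : Matrix n n ℝ) (B : Matrix n m ℝ) (C : Matrix m n ℝ)
    {W : Matrix m m ℝ} (hW : IsUnit W.det) :
    block3 A B Cᵀ Bᵀ (-W⁻¹) 0 C 0 (-W) *
        fromRows (1 : Matrix n n ℝ) (fromRows (W * Bᵀ) (W⁻¹ * C)) =
      fromRows (A + B * W * Bᵀ + Cᵀ * W⁻¹ * C) 0 := by
  simp only [block3, fromBlocks_mul_fromRows, fromCols_mul_fromRows, Matrix.mul_one,
    Matrix.zero_mul, Matrix.neg_mul, add_zero, zero_add, nonsing_inv_mul_cancel_left (h := hW),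
    mul_nonsing_inv_cancel_left (h := hW), ← fromRows_neg, add_neg_cancel, Matrix.mul_assoc,
    add_assoc]

theorem PosDef.neg_schur_of_neg_block3 {A : Matrix n n ℝ} {B : Matrix n m ℝ}
    {C : Matrix m n ℝ} {W : Matrix m m ℝ} (hW : IsUnit W.det)
    (h : (-block3 A B Cᵀ Bᵀ (-W⁻¹) 0 C 0 (-W)).PosDef) :
    (-(A + B * W * Bᵀ + Cᵀ * W⁻¹ * C)).PosDef := by
  have hT :
      Function.Injective (fromRows (1 : Matrix n n ℝ) (fromRows (W * Bᵀ) (W⁻¹ * C))).mulVec :=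
    fun x y hxy => by simpa [fromRows_mulVec] using congrArg (fun v => v ∘ Sum.inl) hxy
  convert h.conjTranspose_mul_mul_same hT using 1
  rw [Matrix.mul_neg, Matrix.neg_mul, Matrix.mul_assoc _ _ (fromRows _ _),
    block3_mul_fromRows A B C hW, conjTranspose_eq_transpose_of_trivial, transpose_fromRows,
    fromCols_mul_fromRows, transpose_one, Matrix.one_mul, Matrix.mul_zero, add_zero]

end Matrix

theorem iterative_convex_overbounding_general (n m : ℕ)
    (Q : Matrix (Fin n) (Fin n) ℝ) (R R0 : Matrix (Fin n) (Fin m) ℝ)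
    (S S0 : Matrix (Fin m) (Fin n) ℝ) (W : Matrix (Fin m) (Fin m) ℝ)
    (hW : W.PosDef)
    (h : (-(Matrix.block3
        (Q + R * S0 + S0ᵀ * Rᵀ + R0 * S + Sᵀ * R0ᵀ - R0 * S0 - S0ᵀ * R0ᵀ)
        (R - R0) (Sᵀ - S0ᵀ)
        (R - R0)ᵀ (-W⁻¹) 0
        (S - S0) 0 (-W))).PosDef) :
    (-(Q + R * S + Sᵀ * Rᵀ)).PosDef := by
  set A := Q + R * S0 + S0ᵀ * Rᵀ + R0 * S + Sᵀ * R0ᵀ - R0 * S0 - S0ᵀ * R0ᵀ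
  set B := R - R0
  set C := S - S0
  have hsplit : Q + R * S + Sᵀ * Rᵀ = A + (B * C + Cᵀ * Bᵀ) := by
    simp only [A, B, C, transpose_sub, Matrix.sub_mul, Matrix.mul_sub]
    abel
  rw [← transpose_sub] at h
  have hschur := PosDef.neg_schur_of_neg_block3 ((isUnit_iff_isUnit_det W).mp hW.isUnit) h
  have hyoung := le_iff.mp (hW.mul_add_conjTranspose_mul_le B C)
  simp only [conjTranspose_eq_transpose_of_trivial] at hyoung
  rw [hsplit]
  convert hschur.add_posSemidef hyoung using 1
  abel

/-- Iterative convex overbounding, bilinear case: if the indicated 3×3 block matrix is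
negative definite, then the BMI `Q + RS + SᵀRᵀ < 0` holds. -/
theorem iterative_convex_overbounding (n m : ℕ)
    (Q : Matrix (Fin n) (Fin n) ℝ) (R R0 : Matrix (Fin n) (Fin m) ℝ)
    (S S0 : Matrix (Fin m) (Fin n) ℝ) (W : Matrix (Fin m) (Fin m) ℝ)
    (hQ : Q.IsSymm) (hW : W.PosDef)
    (h : (-(Matrix.block3
        (Q + R * S0 + S0ᵀ * Rᵀ + R0 * S + Sᵀ * R0ᵀ - R0 * S0 - S0ᵀ * R0ᵀ)
        (R - R0) (Sᵀ - S0ᵀ)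
        (R - R0)ᵀ (-W⁻¹) 0
        (S - S0) 0 (-W))).PosDef) :
    (-(Q + R * S + Sᵀ * Rᵀ)).PosDef :=
  iterative_convex_overbounding_general n m Q R R0 S S0 W hW h
end

section
/- (Finsler's lemma) Let Ψ ∈ S^n, G ∈ ℝ^{n×m}, and H ∈ ℝ^{n×p}. There exists Λ ∈ ℝ^{m×p} such that Ψ + GΛHᵀ + HΛᵀGᵀ is negative definite if and only if there exists σ ∈ ℝ such that both Ψ − σGGᵀ and Ψ − σHHᵀ are negative definite. -/
open Matrix

/-!
Completing the square, `σ X Xᵀ + X K + Kᵀ Xᵀ + σ⁻¹ Kᵀ K = σ⁻¹ (σ Xᵀ + K)ᵀ (σ Xᵀ + K) ⪰ 0`, so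
`Ψ + X K + Kᵀ Xᵀ ≺ 0` forces `Ψ - σ X Xᵀ ≺ 0` as soon as `σ` is large enough for `σ⁻¹ Kᵀ K` to be
absorbed by the margin of negativity. With `(X, K) = (G, Λ Hᵀ)` and `(X, K) = (H, Λᵀ Gᵀ)` this gives
one direction. Conversely, after enlarging `σ` to be nonnegative, put `A = σ G Gᵀ`, `B = σ H Hᵀ`,
`Ψ' = Ψ + ε I` with `ε > 0` small and `Q = A + B - Ψ' ≻ 0`. Then `Λ = -σ² Gᵀ Q⁻¹ H` works, because
`-(Ψ' - A Q⁻¹ B - B Q⁻¹ A) = (A - A Q⁻¹ A) + (B - B Q⁻¹ B) + Ψ' Q⁻¹ Ψ'`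
and each summand is positive semidefinite since `0 ⪯ A, B ⪯ Q`; the margin `ε I` makes the
resulting inequality strict.
-/

open scoped MatrixOrder ComplexOrder

theorem sub_mul_mul_eq_add_of_mul_eq_one {R : Type*} [Ring R] {a q q' : R} (h : q' * q = 1) :
    a - a * q' * a = (1 - a * q') * a * (1 - q' * a) + a * q' * (q - a) * (q' * a) := by
  calc a - a * q' * a = a - 2 • (a * q' * a) + a * q' * q * (q' * a) := by
        rw [mul_assoc a q' q, h, mul_one]; noncomm_ring
    _ = _ := by noncomm_ring

theorem neg_sub_mul_mul_sub_mul_mul_eq_add {R : Type*} [Ring R] {a b ψ r : R}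
    (h₁ : (a + b - ψ) * r = 1) (h₂ : r * (a + b - ψ) = 1) :
    -(ψ - a * r * b - b * r * a) = (a - a * r * a) + (b - b * r * b) + ψ * r * ψ := by
  have hsq : (a + b) * r * (a + b) = (a + b) + ψ + ψ * r * ψ := by
    rw [← sub_add_cancel (a + b) ψ, add_mul, add_mul, mul_add, mul_add, h₁, one_mul, one_mul,
      mul_assoc ψ r, h₂, mul_one]
    abel
  rw [← sub_eq_zero]
  calc _ = (a + b) * r * (a + b) - ((a + b) + ψ + ψ * r * ψ) := by noncomm_ring
    _ = 0 := by rw [hsq, sub_self]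

namespace Matrix

section RCLike

variable {n 𝕜 : Type*} [Fintype n] [DecidableEq n] [RCLike 𝕜]

omit [Fintype n] in
theorem posDef_of_smul_one_le {r : ℝ} (hr : 0 < r) {M : Matrix n n 𝕜} (h : r • 1 ≤ M) :
    M.PosDef := by
  simpa using (PosDef.one.smul hr).add_posSemidef (le_iff.mp h)

theorem PosDef.exists_pos_smul_one_le {P : Matrix n n 𝕜} (hP : P.PosDef) :
    ∃ r : ℝ, 0 < r ∧ r • 1 ≤ P := by
  cases isEmpty_or_nonempty n
  · exact ⟨1, one_pos, (Subsingleton.elim _ _).le⟩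
  simpa [Algebra.algebraMap_eq_smul_one] using
    (CFC.exists_pos_algebraMap_le_iff hP.isHermitian.isSelfAdjoint).mpr
      fun _ hx => hP.isStrictlyPositive.spectrum_pos hx

theorem PosDef.exists_sub_smul_posDef {P Q : Matrix n n 𝕜} (hP : P.PosDef) (hQ : Q.IsHermitian) :
    ∃ t : ℝ, 0 < t ∧ (P - t • Q).PosDef := by
  obtain ⟨r, hr, hrP⟩ := hP.exists_pos_smul_one_le
  obtain ⟨s, hs⟩ := (ContinuousFunctionalCalculus.isCompact_spectrum (R := ℝ) Q).bddAbove
  have hQs : Q ≤ max s 1 • 1 := by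
    simpa [Algebra.algebraMap_eq_smul_one] using
      le_algebraMap_of_spectrum_le (fun x hx => (hs hx).trans (le_max_left s 1)) hQ.isSelfAdjoint
  have hs₁ : 0 < max s 1 := lt_max_of_lt_right one_pos
  set t := r / (2 * max s 1)
  have ht : 0 < t := by positivity
  refine ⟨t, ht, posDef_of_smul_one_le (half_pos hr) ?_⟩
  calc (r / 2) • (1 : Matrix n n 𝕜) = r • 1 - t • (max s 1 • 1) := by
        rw [smul_smul, ← sub_smul]; congr 1; simp only [t]; field_simp; ring
    _ ≤ P - t • Q := sub_le_sub hrP (smul_le_smul_of_nonneg_left hQs ht.le)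

theorem PosDef.exists_sub_smul_one_posDef_and {P₁ P₂ : Matrix n n 𝕜} (h₁ : P₁.PosDef)
    (h₂ : P₂.PosDef) :
    ∃ ε : ℝ, 0 < ε ∧ (P₁ - ε • 1).PosDef ∧ (P₂ - ε • 1).PosDef := by
  obtain ⟨r₁, hr₁, hP₁⟩ := h₁.exists_pos_smul_one_le
  obtain ⟨r₂, hr₂, hP₂⟩ := h₂.exists_pos_smul_one_le
  set ε := min r₁ r₂ / 2
  have hε : 0 < ε := by positivity
  have hsub {P : Matrix n n 𝕜} {r : ℝ} (hP : r • 1 ≤ P) (hr : min r₁ r₂ ≤ r) :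
      (P - ε • 1).PosDef := by
    refine posDef_of_smul_one_le hε (le_sub_iff_add_le.mpr ?_)
    rw [← add_smul, add_halves]
    exact (smul_le_smul_of_nonneg_right hr (nonneg_iff_posSemidef.mpr PosSemidef.one)).trans hP
  exact ⟨ε, hε, hsub hP₁ (min_le_left r₁ r₂), hsub hP₂ (min_le_right r₁ r₂)⟩

theorem posSemidef_sub_mul_inv_mul {A Q : Matrix n n 𝕜} (hA : A.PosSemidef) (hQ : Q.PosDef)
    (hQA : (Q - A).PosSemidef) : (A - A * Q⁻¹ * A).PosSemidef := by
  have hQQ : Q⁻¹ * Q = 1 := nonsing_inv_mul Q ((isUnit_iff_isUnit_det Q).mp hQ.isUnit)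
  rw [sub_mul_mul_eq_add_of_mul_eq_one hQQ]
  have h₁ := hA.conjTranspose_mul_mul_same (1 - Q⁻¹ * A)
  have h₂ := hQA.conjTranspose_mul_mul_same (Q⁻¹ * A)
  simp only [conjTranspose_sub, conjTranspose_mul, conjTranspose_one, hA.1.eq, hQ.1.inv.eq]
    at h₁ h₂
  exact h₁.add h₂

theorem posSemidef_neg_sub_mul_inv_mul_sub_mul_inv_mul {A B Ψ : Matrix n n 𝕜}
    (hA : A.PosSemidef) (hB : B.PosSemidef) (hAΨ : (A - Ψ).PosDef) (hBΨ : (B - Ψ).PosSemidef) :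
    (-(Ψ - A * (A + B - Ψ)⁻¹ * B - B * (A + B - Ψ)⁻¹ * A)).PosSemidef := by
  set Q := A + B - Ψ
  have hQ : Q.PosDef := by simpa [Q, sub_add_eq_add_sub] using hAΨ.add_posSemidef hB
  have hΨ : Ψᴴ = Ψ := by simpa using (hA.1.sub hAΨ.1).eq
  have hdet : IsUnit Q.det := (isUnit_iff_isUnit_det Q).mp hQ.isUnit
  rw [neg_sub_mul_mul_sub_mul_mul_eq_add (mul_nonsing_inv Q hdet) (nonsing_inv_mul Q hdet)]
  refine ((posSemidef_sub_mul_inv_mul hA hQ ?_).add (posSemidef_sub_mul_inv_mul hB hQ ?_)).add ?_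
  · rwa [show Q - A = B - Ψ by simp only [Q]; abel]
  · rw [show Q - B = A - Ψ by simp only [Q]; abel]
    exact hAΨ.posSemidef
  · simpa [hΨ] using hQ.inv.posSemidef.conjTranspose_mul_mul_same Ψ

end RCLike

section Real

variable {n k m p : Type*} [Fintype n] [Fintype k] [Fintype m] [Fintype p]

theorem posSemidef_transpose_mul_self (K : Matrix k n ℝ) : (Kᵀ * K).PosSemidef := by
  simpa using posSemidef_conjTranspose_mul_self K

theorem posSemidef_self_mul_transpose (X : Matrix n k ℝ) : (X * Xᵀ).PosSemidef := by
  simpa using posSemidef_self_mul_conjTranspose X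

omit [Fintype n] in
theorem transpose_mul_mul_transpose (G : Matrix n m ℝ) (Λ : Matrix m p ℝ) (H : Matrix n p ℝ) :
    (G * Λ * Hᵀ)ᵀ = H * Λᵀ * Gᵀ := by
  simp [transpose_mul, Matrix.mul_assoc]

theorem posSemidef_smul_mul_transpose_add_add (X : Matrix n k ℝ) (K : Matrix k n ℝ) {σ : ℝ}
    (hσ : 0 < σ) : (σ • (X * Xᵀ) + X * K + Kᵀ * Xᵀ + σ⁻¹ • (Kᵀ * K)).PosSemidef := by
  convert (posSemidef_transpose_mul_self (σ • Xᵀ + K)).smul (inv_nonneg.mpr hσ.le) using 1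
  simp only [transpose_add, transpose_smul, transpose_transpose, Matrix.add_mul, Matrix.mul_add,
    Matrix.smul_mul, Matrix.mul_smul, smul_add]
  match_scalars <;> field_simp

theorem PosDef.neg_sub_smul_mul_transpose_mono {Ψ : Matrix n n ℝ} {X : Matrix n k ℝ} {σ τ : ℝ}
    (h : (-(Ψ - σ • (X * Xᵀ))).PosDef) (hστ : σ ≤ τ) : (-(Ψ - τ • (X * Xᵀ))).PosDef := by
  convert h.add_posSemidef ((posSemidef_self_mul_transpose X).smul (sub_nonneg.mpr hστ)) using 1
  rw [sub_smul]
  abel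

theorem exists_posDef_neg_sub_smul_mul_transpose [DecidableEq n] {Ψ : Matrix n n ℝ}
    {X : Matrix n k ℝ} {K : Matrix k n ℝ} (h : (-(Ψ + X * K + Kᵀ * Xᵀ)).PosDef) :
    ∃ σ : ℝ, (-(Ψ - σ • (X * Xᵀ))).PosDef := by
  obtain ⟨t, ht, hM⟩ := h.exists_sub_smul_posDef (posSemidef_transpose_mul_self K).1
  refine ⟨t⁻¹, ?_⟩
  have hsplit : -(Ψ - t⁻¹ • (X * Xᵀ)) = (-(Ψ + X * K + Kᵀ * Xᵀ) - t • (Kᵀ * K)) +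
      (t⁻¹ • (X * Xᵀ) + X * K + Kᵀ * Xᵀ + t⁻¹⁻¹ • (Kᵀ * K)) := by
    rw [inv_inv]; abel
  rw [hsplit]
  exact hM.add_posSemidef (posSemidef_smul_mul_transpose_add_add X K (inv_pos.mpr ht))

theorem exists_posDef_neg_add_mul_mul_transpose [DecidableEq n] {Ψ : Matrix n n ℝ}
    {G : Matrix n m ℝ} {H : Matrix n p ℝ} {σ : ℝ} (hσ : 0 ≤ σ)
    (hG : (-(Ψ - σ • (G * Gᵀ))).PosDef) (hH : (-(Ψ - σ • (H * Hᵀ))).PosDef) :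
    ∃ Λ : Matrix m p ℝ, (-(Ψ + G * Λ * Hᵀ + H * Λᵀ * Gᵀ)).PosDef := by
  obtain ⟨ε, hε, hGε, hHε⟩ := hG.exists_sub_smul_one_posDef_and hH
  set A := σ • (G * Gᵀ)
  set B := σ • (H * Hᵀ)
  set Ψ' := Ψ + ε • 1
  set Q := A + B - Ψ'
  have hAΨ : (A - Ψ').PosDef := by
    rwa [show A - Ψ' = -(Ψ - A) - ε • 1 by simp only [Ψ']; abel]
  have hBΨ : (B - Ψ').PosSemidef := by
    rw [show B - Ψ' = -(Ψ - B) - ε • 1 by simp only [Ψ']; abel]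
    exact hHε.posSemidef
  have hA : A.PosSemidef := (posSemidef_self_mul_transpose G).smul hσ
  have hB : B.PosSemidef := (posSemidef_self_mul_transpose H).smul hσ
  have hQ : Q.PosDef := by simpa [Q, sub_add_eq_add_sub] using hAΨ.add_posSemidef hB
  refine ⟨-(σ * σ) • (Gᵀ * Q⁻¹ * H), ?_⟩
  have hΛ : G * (-(σ * σ) • (Gᵀ * Q⁻¹ * H)) * Hᵀ = -(A * Q⁻¹ * B) := by
    simp only [A, B, Matrix.mul_smul, Matrix.smul_mul, smul_smul, Matrix.mul_assoc, neg_smul,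
      Matrix.mul_neg, Matrix.neg_mul]
  have hΛ' : H * (-(σ * σ) • (Gᵀ * Q⁻¹ * H))ᵀ * Gᵀ = -(B * Q⁻¹ * A) := by
    rw [← transpose_mul_mul_transpose, hΛ]
    simpa [Matrix.mul_assoc] using congr($(hB.1.eq) * $(hQ.inv.1.eq) * $(hA.1.eq))
  rw [hΛ, hΛ', show -(Ψ + -(A * Q⁻¹ * B) + -(B * Q⁻¹ * A)) =
      ε • 1 + -(Ψ' - A * Q⁻¹ * B - B * Q⁻¹ * A) by simp only [Ψ']; abel]
  exact (PosDef.one.smul hε).add_posSemidef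
    (posSemidef_neg_sub_mul_inv_mul_sub_mul_inv_mul hA hB hAΨ hBΨ)

end Real

end Matrix

theorem finslers_lemma_general (n m p : ℕ)
    (Ψ : Matrix (Fin n) (Fin n) ℝ)
    (G : Matrix (Fin n) (Fin m) ℝ) (H : Matrix (Fin n) (Fin p) ℝ) :
    (∃ Λ : Matrix (Fin m) (Fin p) ℝ, (-(Ψ + G * Λ * Hᵀ + H * Λᵀ * Gᵀ)).PosDef) ↔
      (∃ σ : ℝ, (-(Ψ - σ • (G * Gᵀ))).PosDef ∧ (-(Ψ - σ • (H * Hᵀ))).PosDef) := by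
  constructor
  · rintro ⟨Λ, hΛ⟩
    obtain ⟨σ₁, h₁⟩ : ∃ σ : ℝ, (-(Ψ - σ • (G * Gᵀ))).PosDef :=
      exists_posDef_neg_sub_smul_mul_transpose (K := Λ * Hᵀ) <| by
        convert hΛ using 3 <;> simp only [transpose_mul, transpose_transpose, Matrix.mul_assoc]
    obtain ⟨σ₂, h₂⟩ : ∃ σ : ℝ, (-(Ψ - σ • (H * Hᵀ))).PosDef :=
      exists_posDef_neg_sub_smul_mul_transpose (K := Λᵀ * Gᵀ) <| by
        convert hΛ using 2
        simp only [transpose_mul, transpose_transpose, Matrix.mul_assoc, add_right_comm]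
    exact ⟨max σ₁ σ₂, h₁.neg_sub_smul_mul_transpose_mono (le_max_left σ₁ σ₂),
      h₂.neg_sub_smul_mul_transpose_mono (le_max_right σ₁ σ₂)⟩
  · rintro ⟨σ, hG, hH⟩
    exact exists_posDef_neg_add_mul_mul_transpose (le_max_right σ 0)
      (hG.neg_sub_smul_mul_transpose_mono (le_max_left σ 0))
      (hH.neg_sub_smul_mul_transpose_mono (le_max_left σ 0))

/-- Finsler's lemma: there exists `Λ` with `Ψ + GΛHᵀ + HΛᵀGᵀ < 0` iff there exists
`σ ∈ ℝ` with `Ψ − σGGᵀ < 0` and `Ψ − σHHᵀ < 0`. -/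
theorem finslers_lemma (n m p : ℕ)
    (Ψ : Matrix (Fin n) (Fin n) ℝ) (hΨ : Ψ.IsSymm)
    (G : Matrix (Fin n) (Fin m) ℝ) (H : Matrix (Fin n) (Fin p) ℝ) :
    (∃ Λ : Matrix (Fin m) (Fin p) ℝ, (-(Ψ + G * Λ * Hᵀ + H * Λᵀ * Gᵀ)).PosDef) ↔
      (∃ σ : ℝ, (-(Ψ - σ • (G * Gᵀ))).PosDef ∧ (-(Ψ - σ • (H * Hᵀ))).PosDef) :=
  finslers_lemma_general n m p Ψ G H
end

section
/- (Alternative form of Finsler's lemma) Let Ψ ∈ S^n and Z ∈ ℝ^{p×n}. If xᵀΨx < 0 holds for every nonzero x ∈ ℝ^n satisfying Zx = 0, then there exists σ > 0 such that Ψ − σZᵀZ is negative definite. -/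
/-!
Both sides are quadratic in `x`, so it suffices to find `σ` that works on the unit sphere. There the
open sets `{x | xᵀΨx < k ‖Zx‖²}` increase with `k` and cover the sphere, because `xᵀΨx < 0` where
`Zx = 0`; by compactness a single `k` already works.
-/

open Matrix

theorem IsCompact.exists_pos_forall_lt_mul {X : Type*} [TopologicalSpace X] {s : Set X}
    (hs : IsCompact s) {f g : X → ℝ} (hf : Continuous f) (hg : Continuous g)
    (hg_nonneg : ∀ x, 0 ≤ g x)
    (hfg : ∀ x ∈ s, g x = 0 → f x < 0) :
    ∃ σ : ℝ, 0 < σ ∧ ∀ x ∈ s, f x < σ * g x := by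
  let U : ℕ → Set X := fun k => {x | f x < (k + 1 : ℝ) * g x}
  have hU_open : ∀ k, IsOpen (U k) := fun k =>
    isOpen_lt hf (continuous_const.mul hg)
  have hU_mono : Monotone U := fun k l hkl x (hx : f x < _) =>
    show f x < _ from hx.trans_le (by gcongr; exact hg_nonneg x)
  have hs_cover : s ⊆ ⋃ k, U k := by
    intro x hx
    rcases (hg_nonneg x).eq_or_lt with hgx | hgx
    · exact Set.mem_iUnion.2 ⟨0, show f x < _ by rw [← hgx, mul_zero]; exact hfg x hx hgx.symm⟩
    · obtain ⟨k, hk⟩ := exists_nat_gt (f x / g x)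
      refine Set.mem_iUnion.2 ⟨k, show f x < _ from ?_⟩
      rw [div_lt_iff₀ hgx] at hk
      nlinarith
  obtain ⟨k, hk⟩ := hs.elim_directed_cover U hU_open hs_cover hU_mono.directed_le
  exact ⟨k + 1, by positivity, hk⟩

theorem Matrix.posDef_of_forall_mem_sphere {ι : Type*} [Fintype ι] {M : Matrix ι ι ℝ}
    (hM : M.IsHermitian) (h : ∀ x ∈ Metric.sphere (0 : ι → ℝ) 1, 0 < x ⬝ᵥ M *ᵥ x) : M.PosDef := by
  refine posDef_iff_dotProduct_mulVec.2 ⟨hM, fun x hx => ?_⟩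
  have hx_norm : 0 < ‖x‖ := norm_pos_iff.2 hx
  have hunit : ‖x‖⁻¹ • x ∈ Metric.sphere (0 : ι → ℝ) 1 := by
    rw [mem_sphere_zero_iff_norm, norm_smul, norm_inv, norm_norm, inv_mul_cancel₀ hx_norm.ne']
  have hpos := h _ hunit
  rw [mulVec_smul, dotProduct_smul, smul_dotProduct, smul_eq_mul, smul_eq_mul, ← mul_assoc] at hpos
  exact pos_of_mul_pos_right hpos (by positivity)

theorem Matrix.dotProduct_mulVec_transpose_mul_self {m ι : Type*} [Fintype m] [Fintype ι]
    (Z : Matrix m ι ℝ) (x : ι → ℝ) : x ⬝ᵥ (Zᵀ * Z) *ᵥ x = Z *ᵥ x ⬝ᵥ Z *ᵥ x := by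
  rw [← mulVec_mulVec, dotProduct_mulVec, vecMul_transpose]

/-- Alternative form of Finsler's lemma: if `xᵀΨx < 0` for every nonzero `x` with `Zx = 0`,
then there exists `σ > 0` such that `Ψ − σZᵀZ` is negative definite. -/
theorem finslers_lemma_alt (n p : ℕ)
    (Ψ : Matrix (Fin n) (Fin n) ℝ) (hΨ : Ψ.IsSymm)
    (Z : Matrix (Fin p) (Fin n) ℝ)
    (h : ∀ x : Fin n → ℝ, x ≠ 0 → Z.mulVec x = 0 → x ⬝ᵥ Ψ.mulVec x < 0) :
    ∃ σ : ℝ, 0 < σ ∧ (-(Ψ - σ • (Zᵀ * Z))).PosDef := by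
  obtain ⟨σ, hσ, hsphere⟩ := (isCompact_sphere (0 : Fin n → ℝ) 1).exists_pos_forall_lt_mul
    (f := fun x => x ⬝ᵥ Ψ *ᵥ x) (g := fun x => Z *ᵥ x ⬝ᵥ Z *ᵥ x)
    (by simp only [mulVec, dotProduct]; fun_prop) (by simp only [mulVec, dotProduct]; fun_prop)
    (fun x => dotProduct_self_star_nonneg (Z *ᵥ x))
    (fun x hx hZx => h x (ne_zero_of_mem_unit_sphere ⟨x, hx⟩) (dotProduct_self_eq_zero.1 hZx))
  have hZ : (Zᵀ * Z).IsSymm := by rw [IsSymm, transpose_mul, transpose_transpose]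
  have hsymm : (-(Ψ - σ • (Zᵀ * Z))).IsHermitian :=
    isHermitian_iff_isSymm.2 (hΨ.sub (hZ.smul σ)).neg
  refine ⟨σ, hσ, posDef_of_forall_mem_sphere hsymm fun x hx => ?_⟩
  rw [neg_mulVec, dotProduct_neg, sub_mulVec, dotProduct_sub, smul_mulVec, dotProduct_smul,
    smul_eq_mul, dotProduct_mulVec_transpose_mul_self]
  linarith [hsphere x hx]
end
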